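/- arXiv:2409.12650 — 3 statements merged into one kernel-verified Lean document; each statement's English description precedes it below -/
import Mathlib

section
/- Define Ψ : C([0,1], ℝ_{≥0}) → C([0,1], ℝ_{≥0}) by Ψ(x)(t) = t·x(t) + 1. Then Ψ is Lipschitz with constant 1 in the sup norm, satisfies sup_{t' ≤ t} |Ψ(x)(t') − Ψ(x̃)(t')| ≤ t · sup_{t' ≤ t} |x(t') − x̃(t')| for all t ∈ [0,1], but Ψ has no fixed point. -/
open ContinuousMap

/-- The map `Ψ(x)(t) = t·x(t) + 1` on continuous functions on `[0,1]`. -/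
noncomputable def Psi12 (x : C(Set.Icc (0:ℝ) 1, ℝ)) : C(Set.Icc (0:ℝ) 1, ℝ) :=
  ⟨fun t => (t : ℝ) * x t + 1, by
    exact ((continuous_subtype_val.mul x.continuous).add continuous_const)⟩

/-- `Ψ(x)(t) = t·x(t) + 1` maps `C([0,1], ℝ≥0)` to itself, is Lipschitz with constant `1`
in the sup norm, satisfies `sup_{t' ≤ t} |Ψ(x)(t') − Ψ(x̃)(t')| ≤ t · sup_{t' ≤ t} |x(t') − x̃(t')|`
for all `t ∈ [0,1]`, but has no fixed point. -/
theorem stmt_12 :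
    (∀ x : C(Set.Icc (0:ℝ) 1, ℝ), (∀ t, 0 ≤ x t) → ∀ t, 0 ≤ Psi12 x t) ∧
    (∀ x y : C(Set.Icc (0:ℝ) 1, ℝ), (∀ t, 0 ≤ x t) → (∀ t, 0 ≤ y t) →
      ‖Psi12 x - Psi12 y‖ ≤ ‖x - y‖) ∧
    (∀ x y : C(Set.Icc (0:ℝ) 1, ℝ), (∀ t, 0 ≤ x t) → (∀ t, 0 ≤ y t) →
      ∀ t : Set.Icc (0:ℝ) 1, ∀ C : ℝ,
        (∀ t' : Set.Icc (0:ℝ) 1, (t' : ℝ) ≤ (t : ℝ) → |x t' - y t'| ≤ C) →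
        ∀ t' : Set.Icc (0:ℝ) 1, (t' : ℝ) ≤ (t : ℝ) →
          |Psi12 x t' - Psi12 y t'| ≤ (t : ℝ) * C) ∧
    ¬ ∃ x : C(Set.Icc (0:ℝ) 1, ℝ), (∀ t, 0 ≤ x t) ∧ Psi12 x = x := by
  refine ⟨?_, ?_, ?_, ?_⟩
  · intro x hx t
    have ht := t.2.1
    have := hx t
    simp only [Psi12, ContinuousMap.coe_mk]
    positivity
  · intro x y hx hy
    apply ContinuousMap.norm_le _ (norm_nonneg _) |>.2
    intro t
    have h1 : |x t - y t| ≤ ‖x - y‖ := by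
      calc |x t - y t| = ‖(x - y) t‖ := by simp [Real.norm_eq_abs]
        _ ≤ ‖x - y‖ := ContinuousMap.norm_coe_le_norm _ _
    have ht0 := t.2.1
    have ht1 := t.2.2
    calc ‖(Psi12 x - Psi12 y) t‖ = |(t:ℝ) * (x t - y t)| := by
          simp [Psi12, Real.norm_eq_abs]; rw [← abs_mul, mul_sub]
      _ = |(t:ℝ)| * |x t - y t| := abs_mul _ _
      _ ≤ 1 * ‖x - y‖ := by
          apply mul_le_mul _ h1 (abs_nonneg _) zero_le_one
          rw [abs_of_nonneg ht0]; exact ht1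
      _ = ‖x - y‖ := one_mul _
  · intro x y hx hy t C hC t' ht'
    have h1 := hC t' ht'
    have ht'0 := t'.2.1
    have hC0 : 0 ≤ C := le_trans (abs_nonneg _) (hC t' ht')
    calc |Psi12 x t' - Psi12 y t'| = |(t':ℝ)| * |x t' - y t'| := by
          rw [← abs_mul]; simp only [Psi12, ContinuousMap.coe_mk]; ring_nf
      _ ≤ (t:ℝ) * C := by
          rw [abs_of_nonneg ht'0]
          exact mul_le_mul ht' h1 (abs_nonneg _) (le_trans ht'0 ht')
  · rintro ⟨x, hx, hfix⟩
    have h1 : (⟨1, by norm_num⟩ : Set.Icc (0:ℝ) 1) ∈ Set.univ := trivial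
    have := ContinuousMap.congr_fun hfix ⟨1, by norm_num⟩
    simp only [Psi12, ContinuousMap.coe_mk] at this
    linarith
end

section
/- Let (Ω, 𝒜, ℙ) be a probability space, and for each n let Z_n : Ω → ℝ^d and Z : Ω → ℝ^d be random vectors such that Z_n(ω) → Z(ω) for ℙ-almost all ω. Fix a finite index set P and for each ω let E(ω) := argmin_{p ∈ P} Z(ω)_p and E_n(ω) := argmin_{p ∈ P} (Z_n(ω))_p. Then for every subset M ⊆ P: liminf_{n→∞} ℙ({ω : E_n(ω) ⊆ M}) ≥ ℙ({ω : E(ω) ⊆ M}). -/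
/-! Where the limit vector `Z(ω)` has a strict preference `Z(ω)_r < Z(ω)_p`, the same strict
inequality holds for `Zₙ(ω)` once `n` is large, so eventually `Eₙ(ω) ⊆ E(ω)`, and `E(ω) ⊆ M`
forces `ω` into `{Eₙ ⊆ M}` for all large `n`. Fatou's lemma for sets, `μ (liminf Aₙ) ≤ liminf μ Aₙ`,
then gives the inequality. -/

open MeasureTheory Filter Topology

theorem MeasureTheory.measure_liminf_le_liminf_measure {α : Type*} [MeasurableSpace α]
    (μ : Measure α) (s : ℕ → Set α) :
    μ (liminf s atTop) ≤ liminf (fun n => μ (s n)) atTop := by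
  have hmono : Monotone fun n => ⋂ i ≥ n, s i :=
    fun _ _ hmn => Set.biInter_subset_biInter_left fun _ hi => hmn.trans hi
  rw [liminf_eq_iSup_iInf_of_nat, liminf_eq_iSup_iInf_of_nat]
  simp only [Set.iSup_eq_iUnion, Set.iInf_eq_iInter]
  rw [hmono.measure_iUnion]
  exact iSup_mono fun n => le_iInf₂ fun i hi => measure_mono (Set.biInter_subset_of_mem hi)

theorem MeasureTheory.measure_le_liminf_measure_of_ae_eventually_mem {α : Type*}
    [MeasurableSpace α] {μ : Measure α} {A : Set α} {s : ℕ → Set α}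
    (h : ∀ᵐ ω ∂μ, ω ∈ A → ∀ᶠ n in atTop, ω ∈ s n) :
    μ A ≤ liminf (fun n => μ (s n)) atTop := by
  refine (measure_mono_ae ?_).trans (measure_liminf_le_liminf_measure μ s)
  filter_upwards [h] with ω hω hA
  exact mem_liminf_iff_eventually_mem.mpr (hω hA)

def argmins {P α : Type*} [LE α] (z : P → α) : Set P :=
  {p | ∀ q, z p ≤ z q}

theorem eventually_argmins_subset {ι P α : Type*} [Finite P] [LinearOrder α] [TopologicalSpace α]
    [OrderClosedTopology α] {l : Filter ι} {z : ι → P → α} {z₀ : P → α}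
    (h : ∀ p, Tendsto (fun n => z n p) l (𝓝 (z₀ p))) :
    ∀ᶠ n in l, argmins (z n) ⊆ argmins z₀ := by
  suffices ∀ p, ∀ᶠ n in l, p ∈ argmins (z n) → p ∈ argmins z₀ from
    (eventually_all.mpr this).mono fun _ hn p => hn p
  intro p
  by_cases hp : p ∈ argmins z₀
  · exact .of_forall fun _ _ => hp
  obtain ⟨r, hr⟩ : ∃ r, z₀ r < z₀ p := by simpa [argmins] using hp
  filter_upwards [(h r).eventually_lt (h p) hr] with n hn hmin
  exact absurd (hmin r) hn.not_ge

theorem stmt_18_general {Ω : Type*} [MeasurableSpace Ω] (ℙ : Measure Ω)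
    (P : Type*) [Fintype P]
    (Zn : ℕ → Ω → P → ℝ) (Z : Ω → P → ℝ)
    (hconv : ∀ᵐ ω ∂ℙ, ∀ p : P, Tendsto (fun n => Zn n ω p) atTop (nhds (Z ω p)))
    (M : Set P) :
    ℙ {ω | {p | ∀ q, Z ω p ≤ Z ω q} ⊆ M} ≤
      atTop.liminf (fun n => ℙ {ω | {p | ∀ q, Zn n ω p ≤ Zn n ω q} ⊆ M}) := by
  refine measure_le_liminf_measure_of_ae_eventually_mem ?_
  filter_upwards [hconv] with ω hω hE
  exact (eventually_argmins_subset hω).mono fun _ hn => hn.trans hE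

/-- Let `(Zₙ)`, `Z` be random vectors indexed by a finite set `P` with `Zₙ(ω) → Z(ω)`
for a.e. `ω`. With `E(ω)` the argmin set of `Z(ω)` and `Eₙ(ω)` that of `Zₙ(ω)`, for every
`M ⊆ P`: `liminf_n ℙ({Eₙ ⊆ M}) ≥ ℙ({E ⊆ M})`. -/
theorem stmt_18 {Ω : Type*} [MeasurableSpace Ω] (ℙ : Measure Ω) [IsProbabilityMeasure ℙ]
    (P : Type*) [Fintype P] [Nonempty P]
    (Zn : ℕ → Ω → P → ℝ) (Z : Ω → P → ℝ)
    (hZn : ∀ n, Measurable (Zn n)) (hZ : Measurable Z)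
    (hconv : ∀ᵐ ω ∂ℙ, ∀ p : P, Tendsto (fun n => Zn n ω p) atTop (nhds (Z ω p)))
    (M : Set P) :
    ℙ {ω | {p | ∀ q, Z ω p ≤ Z ω q} ⊆ M} ≤
      atTop.liminf (fun n => ℙ {ω | {p | ∀ q, Zn n ω p ≤ Zn n ω q} ⊆ M}) :=
  stmt_18_general ℙ P Zn Z hconv M
end

section
/- Let X be a real random variable that is the sum of a constant c and a non-trivial linear combination Σ_{j=1}^m a_j ε_j with not all a_j = 0, where ε_1, …, ε_m are independent real random variables each having a probability density function bounded by B. Then X has a probability density function bounded by B / max_j |a_j|. -/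
open MeasureTheory ProbabilityTheory

/-- Let `X = c + Σⱼ aⱼ·εⱼ` with not all `aⱼ = 0`, where `ε₁, …, ε_m` are independent real
random variables each with a probability density function bounded by `B` (meaning
`ℙ(εⱼ ∈ S) ≤ B·λ(S)` for measurable `S`). Then `X` has a probability density function
bounded by `B / maxⱼ |aⱼ|`. -/
theorem stmt_19 {Ω : Type*} [MeasurableSpace Ω] (μpr : Measure Ω) [IsProbabilityMeasure μpr]
    (m : ℕ) (ε : Fin m → Ω → ℝ) (a : Fin m → ℝ) (c : ℝ) (B : ℝ) (hB : 0 ≤ B)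
    (hmeas : ∀ j, Measurable (ε j))
    (hindep : iIndepFun ε μpr)
    (hpdf : ∀ j, ∀ S : Set ℝ, MeasurableSet S →
      μpr (ε j ⁻¹' S) ≤ ENNReal.ofReal B * volume S)
    (ha : ∃ j, a j ≠ 0) :
    ∀ S : Set ℝ, MeasurableSet S →
      μpr ((fun ω => c + ∑ j, a j * ε j ω) ⁻¹' S) ≤
        ENNReal.ofReal (B / ⨆ j, |a j|) * volume S := by
  classical
  obtain ⟨j1, hj1⟩ := ha
  have : Nonempty (Fin m) := ⟨j1⟩
  obtain ⟨j0, hj0⟩ := Finite.exists_max (fun j => |a j|)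
  have hja : a j0 ≠ 0 := by
    intro h
    have := hj0 j1
    rw [h, abs_zero] at this
    exact hj1 (abs_eq_zero.mp (le_antisymm this (abs_nonneg _)))
  have habs : (0:ℝ) < |a j0| := abs_pos.mpr hja
  have hsup : (⨆ j, |a j|) = |a j0| :=
    le_antisymm (ciSup_le hj0) (le_ciSup (f := fun j => |a j|) (Set.Finite.bddAbove (Set.finite_range _)) j0)
  intro S hS
  -- define g j = a j • ε j
  set g : Fin m → Ω → ℝ := fun j ω => a j * ε j ω with hg
  have hgmeas : ∀ j, Measurable (g j) := fun j => (measurable_const_mul (a j)).comp (hmeas j)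
  have hgindep : iIndepFun g μpr :=
    hindep.comp (fun j => (a j * ·)) (fun j => measurable_const_mul (a j))
  -- Z, Y
  set Z : Ω → ℝ := fun ω => c + ∑ j ∈ Finset.univ.erase j0, g j ω with hZ
  set Y : Ω → ℝ := g j0 with hY
  have hZmeas : Measurable Z :=
    measurable_const.add (Finset.measurable_sum _ (fun j _ => hgmeas j))
  have hYmeas : Measurable Y := hgmeas j0
  have hindYZ : IndepFun Z Y μpr := by
    have h1 : IndepFun (∑ j ∈ Finset.univ.erase j0, g j) (g j0) μpr :=
      hgindep.indepFun_finset_sum_of_notMem hgmeas (Finset.notMem_erase j0 _)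
    have h2 := h1.comp (measurable_const_add c) measurable_id
    have : (fun ω => c + (∑ j ∈ Finset.univ.erase j0, g j) ω) = Z := by
      funext ω; simp [hZ, Finset.sum_apply]
    rwa [show ((c + ·) ∘ (∑ j ∈ Finset.univ.erase j0, g j)) = Z from this,
      show (id ∘ g j0) = Y from rfl] at h2
  -- rewrite X as Z + Y
  have hX : (fun ω => c + ∑ j, a j * ε j ω) = fun ω => Z ω + Y ω := by
    funext ω
    have := Finset.add_sum_erase Finset.univ (fun j => a j * ε j ω) (Finset.mem_univ j0)
    simp only [hZ, hY, hg]
    rw [← this]; ring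
  rw [hX]
  -- product measure
  have hmap : μpr.map (fun ω => (Z ω, Y ω)) = (μpr.map Z).prod (μpr.map Y) :=
    (indepFun_iff_map_prod_eq_prod_map_map hZmeas.aemeasurable hYmeas.aemeasurable).mp hindYZ
  have hTs : MeasurableSet {p : ℝ × ℝ | p.1 + p.2 ∈ S} :=
    (measurable_fst.add measurable_snd) hS
  have key : μpr ((fun ω => Z ω + Y ω) ⁻¹' S)
      = ((μpr.map Z).prod (μpr.map Y)) {p : ℝ × ℝ | p.1 + p.2 ∈ S} := by
    rw [← hmap, Measure.map_apply (hZmeas.prodMk hYmeas) hTs]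
    rfl
  rw [key, Measure.prod_apply hTs]
  -- slice bound
  have hslice : ∀ z : ℝ, (μpr.map Y) (Prod.mk z ⁻¹' {p : ℝ × ℝ | p.1 + p.2 ∈ S})
      ≤ ENNReal.ofReal (B / |a j0|) * volume S := by
    intro z
    have hpre : Prod.mk z ⁻¹' {p : ℝ × ℝ | p.1 + p.2 ∈ S} = (fun y => z + y) ⁻¹' S := rfl
    rw [hpre, Measure.map_apply hYmeas (measurable_const_add z hS)]
    have : Y ⁻¹' ((z + ·) ⁻¹' S) = ε j0 ⁻¹' ((fun t => z + a j0 * t) ⁻¹' S) := rfl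
    rw [this]
    have hmS : MeasurableSet ((fun t => z + a j0 * t) ⁻¹' S) :=
      ((measurable_const_mul (a j0)).const_add z) hS
    refine (hpdf j0 _ hmS).trans ?_
    have hvol : volume ((fun t => z + a j0 * t) ⁻¹' S)
        = ENNReal.ofReal |(a j0)⁻¹| * volume S := by
      have : (fun t => z + a j0 * t) ⁻¹' S = (a j0 * ·) ⁻¹' ((z + ·) ⁻¹' S) := rfl
      rw [this, Real.volume_preimage_mul_left hja]
      congr 1
      exact measure_preimage_add volume z S
    rw [hvol, ← mul_assoc, ← ENNReal.ofReal_mul hB, abs_inv, ← div_eq_mul_inv]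
  calc ∫⁻ z, (μpr.map Y) (Prod.mk z ⁻¹' {p : ℝ × ℝ | p.1 + p.2 ∈ S}) ∂(μpr.map Z)
      ≤ ∫⁻ _, ENNReal.ofReal (B / |a j0|) * volume S ∂(μpr.map Z) :=
        lintegral_mono (fun z => hslice z)
    _ = ENNReal.ofReal (B / |a j0|) * volume S := by
        rw [lintegral_const]
        have : IsProbabilityMeasure (μpr.map Z) := Measure.isProbabilityMeasure_map hZmeas.aemeasurable
        simp
    _ = ENNReal.ofReal (B / ⨆ j, |a j|) * volume S := by rw [hsup]
end
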